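/- Gumbel-Max trick: if g(a) for a ∈ {1,…,k} are i.i.d. standard Gumbel random variables and ℓ : {1,…,k} → ℝ are fixed logits, then argmax_a (g(a) + ℓ(a)) is distributed according to the softmax distribution, i.e., P(argmax = a) = exp(ℓ(a)) / ∑_b exp(ℓ(b)). -/

import Mathlib

/-!
The shifted variables `Y b = g b + ℓ b` are independent Gumbel variables with locations `ℓ b`.
A Gumbel CDF with location `m` is `exp (-(exp m * exp (-x)))`, so a product of such CDFs has the
same form with the weights `exp m` added up. Conditioning on `Y a = x`, all other `Y b` lie below
`x` with probability `exp (-(T * exp (-x)))`, where `T = ∑ b ≠ a, exp (ℓ b)`. Multiplied by the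
density of `Y a`, this is `exp (ℓ a) / (exp (ℓ a) + T)` times the Gumbel density with location
`log (exp (ℓ a) + T)`, so it integrates to the softmax weight of `a`.
-/

open MeasureTheory ProbabilityTheory Finset Real
open Set Filter Topology

lemma pi_setOf_forall_ne_lt {α : Type*} [TopologicalSpace α] [LinearOrder α]
    [OrderClosedTopology α] [SecondCountableTopology α] [MeasurableSpace α]
    [OpensMeasurableSpace α] {n : ℕ} (ν : Fin (n + 1) → Measure α) [∀ i, SigmaFinite (ν i)]
    (a : Fin (n + 1)) :
    Measure.pi ν {y | ∀ b ≠ a, y b < y a} = ∫⁻ x, ∏ j, ν (a.succAbove j) (Iio x) ∂ν a := by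
  set B : Set (α × (Fin n → α)) := {p | ∀ j, p.2 j < p.1}
  have hB : MeasurableSet B := by
    simp only [B, ofPred_forall]
    exact .iInter fun j => measurableSet_lt ((measurable_pi_apply j).comp measurable_snd)
      measurable_fst
  have hpre : {y : Fin (n + 1) → α | ∀ b ≠ a, y b < y a} =
      MeasurableEquiv.piFinSuccAbove (fun _ => α) a ⁻¹' B := by
    ext y
    simp [B, a.forall_iff_succAbove, Fin.succAbove_ne, Fin.removeNth]
  have hsection : ∀ x, Prod.mk x ⁻¹' B = univ.pi fun _ => Iio x := by
    intro x; ext y; simp [B]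
  rw [hpre, (measurePreserving_piFinSuccAbove ν a).measure_preimage hB.nullMeasurableSet,
    Measure.prod_apply hB]
  simp_rw [hsection, Measure.pi_pi]

lemma exp_neg_sub_eq_exp_mul_exp_neg (m x : ℝ) : exp (-(x - m)) = exp m * exp (-x) := by
  rw [← exp_add]; ring_nf

namespace ProbabilityTheory

noncomputable def gumbelCDFReal (m x : ℝ) : ℝ := exp (-exp (-(x - m)))

noncomputable def gumbelPDFReal (m x : ℝ) : ℝ := exp (-(x - m)) * exp (-exp (-(x - m)))

lemma gumbelPDFReal_nonneg (m x : ℝ) : 0 ≤ gumbelPDFReal m x := by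
  unfold gumbelPDFReal; positivity

lemma hasDerivAt_gumbelCDFReal (m x : ℝ) :
    HasDerivAt (gumbelCDFReal m) (gumbelPDFReal m x) x := by
  have hlin : HasDerivAt (fun x : ℝ => -(x - m)) (-1) x :=
    ((hasDerivAt_id x).sub_const m).fun_neg
  have hinner : HasDerivAt (fun x => -exp (-(x - m))) (exp (-(x - m))) x := by
    simpa using hlin.exp.fun_neg
  exact hinner.exp.congr_deriv (mul_comm _ _)

lemma tendsto_gumbelCDFReal_atBot (m : ℝ) : Tendsto (gumbelCDFReal m) atBot (𝓝 0) :=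
  tendsto_exp_atBot.comp <| tendsto_neg_atTop_atBot.comp <| tendsto_exp_atTop.comp <|
    tendsto_neg_atBot_atTop.comp <| tendsto_atBot_add_const_right _ (-m) tendsto_id

lemma tendsto_gumbelCDFReal_atTop (m : ℝ) : Tendsto (gumbelCDFReal m) atTop (𝓝 1) := by
  have h : Tendsto (fun x => -(x - m)) atTop atBot :=
    tendsto_neg_atTop_atBot.comp <| tendsto_atTop_add_const_right _ (-m) tendsto_id
  have h' : Tendsto (fun x => -exp (-(x - m))) atTop (𝓝 0) := by
    simpa using (tendsto_exp_atBot.comp h).neg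
  have := (continuous_exp.tendsto 0).comp h'
  rwa [exp_zero] at this

lemma gumbelCDFReal_nonneg (m x : ℝ) : 0 ≤ gumbelCDFReal m x := (exp_pos _).le

lemma gumbelCDFReal_le_one (m x : ℝ) : gumbelCDFReal m x ≤ 1 :=
  exp_le_one_iff.2 (neg_nonpos.2 (exp_pos _).le)

@[fun_prop]
lemma continuous_gumbelPDFReal (m : ℝ) : Continuous (gumbelPDFReal m) := by
  unfold gumbelPDFReal; fun_prop

@[fun_prop]
lemma measurable_gumbelPDFReal (m : ℝ) : Measurable (gumbelPDFReal m) :=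
  (continuous_gumbelPDFReal m).measurable

lemma integrable_gumbelPDFReal (m : ℝ) : Integrable (gumbelPDFReal m) := by
  have hcont := continuous_gumbelPDFReal m
  refine integrable_of_intervalIntegral_norm_bounded 1
    (fun _ => hcont.integrableOn_Ioc) tendsto_neg_atTop_atBot tendsto_id
    (Eventually.of_forall fun r => ?_)
  simp_rw [Real.norm_of_nonneg (gumbelPDFReal_nonneg m _)]
  rw [intervalIntegral.integral_eq_sub_of_hasDerivAt (fun x _ => hasDerivAt_gumbelCDFReal m x)
    (hcont.intervalIntegrable _ _)]
  linarith [gumbelCDFReal_le_one m (id r), gumbelCDFReal_nonneg m (-r)]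

lemma integral_Iic_gumbelPDFReal (m t : ℝ) :
    ∫ x in Iic t, gumbelPDFReal m x = gumbelCDFReal m t := by
  rw [integral_Iic_of_hasDerivAt_of_tendsto' (fun x _ => hasDerivAt_gumbelCDFReal m x)
    (integrable_gumbelPDFReal m).integrableOn (tendsto_gumbelCDFReal_atBot m), sub_zero]

lemma integral_gumbelPDFReal (m : ℝ) : ∫ x, gumbelPDFReal m x = 1 := by
  rw [integral_of_hasDerivAt_of_tendsto (hasDerivAt_gumbelCDFReal m)
    (integrable_gumbelPDFReal m) (tendsto_gumbelCDFReal_atBot m)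
    (tendsto_gumbelCDFReal_atTop m), sub_zero]

noncomputable def gumbelMeasure (m : ℝ) : Measure ℝ :=
  volume.withDensity fun x => ENNReal.ofReal (gumbelPDFReal m x)

lemma gumbelMeasure_apply (m : ℝ) {s : Set ℝ} (hs : MeasurableSet s) :
    gumbelMeasure m s = ENNReal.ofReal (∫ x in s, gumbelPDFReal m x) := by
  rw [gumbelMeasure, withDensity_apply _ hs, ofReal_integral_eq_lintegral_ofReal
    (integrable_gumbelPDFReal m).integrableOn (Eventually.of_forall (gumbelPDFReal_nonneg m))]

instance (m : ℝ) : IsProbabilityMeasure (gumbelMeasure m) :=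
  ⟨by rw [gumbelMeasure_apply m MeasurableSet.univ, setIntegral_univ, integral_gumbelPDFReal,
    ENNReal.ofReal_one]⟩

lemma gumbelMeasure_Iic (m t : ℝ) :
    gumbelMeasure m (Iic t) = ENNReal.ofReal (gumbelCDFReal m t) := by
  rw [gumbelMeasure_apply m measurableSet_Iic, integral_Iic_gumbelPDFReal]

lemma gumbelMeasure_Iio (m t : ℝ) :
    gumbelMeasure m (Iio t) = ENNReal.ofReal (gumbelCDFReal m t) := by
  rw [gumbelMeasure_apply m measurableSet_Iio, ← integral_Iic_eq_integral_Iio,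
    integral_Iic_gumbelPDFReal]

lemma gumbelPDFReal_eq (m x : ℝ) :
    gumbelPDFReal m x = exp m * exp (-x) * exp (-(exp m * exp (-x))) := by
  rw [gumbelPDFReal, exp_neg_sub_eq_exp_mul_exp_neg]

lemma prod_gumbelCDFReal {ι : Type*} (s : Finset ι) (m : ι → ℝ) (x : ℝ) :
    ∏ i ∈ s, gumbelCDFReal (m i) x = exp (-((∑ i ∈ s, exp (m i)) * exp (-x))) := by
  simp only [gumbelCDFReal, exp_neg_sub_eq_exp_mul_exp_neg, ← exp_sum, sum_neg_distrib,
    sum_mul]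

lemma lintegral_ofReal_gumbelPDFReal (m : ℝ) :
    ∫⁻ x, ENNReal.ofReal (gumbelPDFReal m x) = 1 := by
  rw [← measure_univ (μ := gumbelMeasure m), gumbelMeasure,
    withDensity_apply _ MeasurableSet.univ, Measure.restrict_univ]

lemma gumbelPDFReal_mul_exp_neg_mul_exp_neg (m : ℝ) {T : ℝ} (hT : 0 ≤ T) (x : ℝ) :
    gumbelPDFReal m x * exp (-(T * exp (-x))) =
      exp m / (exp m + T) * gumbelPDFReal (log (exp m + T)) x := by
  have hS : 0 < exp m + T := by positivity
  have hsplit : exp (-((exp m + T) * exp (-x))) =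
      exp (-(exp m * exp (-x))) * exp (-(T * exp (-x))) := by
    rw [← exp_add]; ring_nf
  rw [gumbelPDFReal_eq, gumbelPDFReal_eq, exp_log hS, hsplit]
  field_simp

lemma lintegral_exp_neg_mul_exp_neg_gumbelMeasure (m : ℝ) {T : ℝ} (hT : 0 ≤ T) :
    ∫⁻ x, ENNReal.ofReal (exp (-(T * exp (-x)))) ∂gumbelMeasure m =
      ENNReal.ofReal (exp m / (exp m + T)) := by
  rw [gumbelMeasure, lintegral_withDensity_eq_lintegral_mul _ (by fun_prop) (by fun_prop)]
  simp_rw [Pi.mul_apply, ← ENNReal.ofReal_mul (gumbelPDFReal_nonneg m _),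
    gumbelPDFReal_mul_exp_neg_mul_exp_neg m hT,
    ENNReal.ofReal_mul (by positivity : (0 : ℝ) ≤ exp m / (exp m + T))]
  rw [lintegral_const_mul _ (by fun_prop), lintegral_ofReal_gumbelPDFReal, mul_one]

lemma map_eq_gumbelMeasure {Ω : Type*} [MeasurableSpace Ω] {μ : Measure Ω} [IsFiniteMeasure μ]
    {X : Ω → ℝ} (hX : Measurable X) {m : ℝ}
    (hcdf : ∀ x, μ {ω | X ω ≤ x} = ENNReal.ofReal (gumbelCDFReal m x)) :
    μ.map X = gumbelMeasure m :=
  Measure.ext_of_Iic _ _ fun x => by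
    rw [Measure.map_apply hX measurableSet_Iic, gumbelMeasure_Iic]
    exact hcdf x

end ProbabilityTheory

theorem pi_gumbelMeasure_setOf_forall_ne_lt {n : ℕ} (m : Fin (n + 1) → ℝ) (a : Fin (n + 1)) :
    Measure.pi (fun b => gumbelMeasure (m b)) {y | ∀ b ≠ a, y b < y a} =
      ENNReal.ofReal (exp (m a) / ∑ b, exp (m b)) := by
  have hT : 0 ≤ ∑ j, exp (m (a.succAbove j)) := by positivity
  simp_rw [pi_setOf_forall_ne_lt, gumbelMeasure_Iio,
    ← ENNReal.ofReal_prod_of_nonneg fun j _ => gumbelCDFReal_nonneg _ _, prod_gumbelCDFReal]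
  rw [lintegral_exp_neg_mul_exp_neg_gumbelMeasure _ hT, Fin.sum_univ_succAbove _ a]

theorem stmt_8_general {Ω : Type*} [MeasurableSpace Ω] (μ : Measure Ω) [IsProbabilityMeasure μ]
    (k : ℕ) (g : Fin k → Ω → ℝ) (ℓ : Fin k → ℝ)
    (hmeas : ∀ a, Measurable (g a))
    (hindep : iIndepFun g μ)
    (hcdf : ∀ a x, μ {ω | g a ω ≤ x} = ENNReal.ofReal (exp (-exp (-x))))
    (a : Fin k) :
    μ {ω | ∀ b, b ≠ a → g b ω + ℓ b < g a ω + ℓ a} =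
      ENNReal.ofReal (exp (ℓ a) / ∑ b, exp (ℓ b)) := by
  obtain ⟨n, rfl⟩ := Nat.exists_eq_add_one.2 a.pos
  set Y : Fin (n + 1) → Ω → ℝ := fun b ω => g b ω + ℓ b
  have hY : ∀ b, Measurable (Y b) := fun b => (hmeas b).add_const _
  have hlaw : ∀ b, μ.map (Y b) = gumbelMeasure (ℓ b) := fun b =>
    map_eq_gumbelMeasure (hY b) fun x => by
      simpa [Y, ← le_sub_iff_add_le, gumbelCDFReal] using hcdf b (x - ℓ b)
  have hjoint : μ.map (fun ω b => Y b ω) = Measure.pi fun b => gumbelMeasure (ℓ b) := by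
    rw [(hindep.comp _ fun b => measurable_add_const (ℓ b)).map_fun_eq_pi_map
      fun b => (hY b).aemeasurable]
    simp_rw [← hlaw]
  have hevent : MeasurableSet {y : Fin (n + 1) → ℝ | ∀ b ≠ a, y b < y a} := by
    simp only [ofPred_forall]
    exact .iInter fun b => .iInter fun _ =>
      measurableSet_lt (measurable_pi_apply b) (measurable_pi_apply a)
  calc μ {ω | ∀ b, b ≠ a → g b ω + ℓ b < g a ω + ℓ a}
      = μ.map (fun ω b => Y b ω) {y | ∀ b ≠ a, y b < y a} :=
        (Measure.map_apply (measurable_pi_lambda _ hY) hevent).symm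
    _ = _ := by rw [hjoint, pi_gumbelMeasure_setOf_forall_ne_lt]

/-- Gumbel-Max trick: if `g a`, `a : Fin k`, are i.i.d. standard Gumbel random
variables (CDF `exp (−exp (−x))`) and `ℓ` are fixed logits, then the probability
that `a` is the (almost surely unique) argmax of `g · + ℓ ·` equals the softmax
probability `exp (ℓ a) / ∑ b, exp (ℓ b)`. -/
theorem stmt_8 {Ω : Type*} [MeasurableSpace Ω] (μ : Measure Ω) [IsProbabilityMeasure μ]
    (k : ℕ) (hk : 1 ≤ k) (g : Fin k → Ω → ℝ) (ℓ : Fin k → ℝ)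
    (hmeas : ∀ a, Measurable (g a))
    (hindep : iIndepFun g μ)
    (hcdf : ∀ a x, μ {ω | g a ω ≤ x} = ENNReal.ofReal (exp (-exp (-x))))
    (a : Fin k) :
    μ {ω | ∀ b, b ≠ a → g b ω + ℓ b < g a ω + ℓ a} =
      ENNReal.ofReal (exp (ℓ a) / ∑ b, exp (ℓ b)) :=
  stmt_8_general μ k g ℓ hmeas hindep hcdf a
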